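/- For every even integer L ≥ 2 and every ε with 0 < ε < 1/4, the μ-measure of the set of configurations φ for which every bond is ε-disordered is at least (1 − 4ε)^{L²/2}. -/

import Mathlib

open MeasureTheory Real

/-- The site space: the discrete torus of side `L`. -/
abbrev Torus (L : ℕ) := ZMod L × ZMod L

/-- A configuration of the toy model: one circle-valued spin per site. -/
abbrev Config (L : ℕ) := Torus L → AddCircle (1 : ℝ)

/-- The two unit coordinate vectors `e₁ = (1,0)` and `e₂ = (0,1)`. -/
def coordVec (L : ℕ) : Fin 2 → Torus L
  | 0 => (1, 0)
  | 1 => (0, 1)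

/-- The product of normalized Haar measures on the spins. -/
noncomputable def toyMeasure (L : ℕ) [NeZero L] : Measure (Config L) :=
  Measure.pi fun _ => (AddCircle.haarAddCircle : Measure (AddCircle (1 : ℝ)))

/-- A bond `(x, x + eᵢ)` of the configuration `φ` is `ε`-ordered when
`‖φ x - φ (x + eᵢ)‖ ≤ ε/2`, where `‖·‖` is the quotient norm on `ℝ/ℤ`. -/
def IsOrderedBond (L : ℕ) [NeZero L] (ε : ℝ) (φ : Config L) (x : Torus L) (i : Fin 2) : Prop :=
  ‖φ x - φ (x + coordVec L i)‖ ≤ ε / 2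

noncomputable instance (L : ℕ) [NeZero L] (ε : ℝ) (φ : Config L) (x : Torus L) (i : Fin 2) :
    Decidable (IsOrderedBond L ε φ x i) :=
  Real.decidableLE _ _

/-- The toy Hamiltonian: minus the number of `ε`-ordered bonds. -/
noncomputable def toyH (L : ℕ) [NeZero L] (ε : ℝ) (φ : Config L) : ℝ :=
  -(∑ x : Torus L, ∑ i : Fin 2, if IsOrderedBond L ε φ x i then (1 : ℝ) else 0)

/-- The toy-model partition function. -/
noncomputable def toyZ (L : ℕ) [NeZero L] (β ε : ℝ) : ℝ :=
  ∫ φ, Real.exp (-β * toyH L ε φ) ∂(toyMeasure L)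

/-! For even `L` the torus is bipartite: every bond joins an even site to an odd one. Fix the
spins on the odd sites. An even-site spin makes its four bonds disordered as soon as it avoids
the four arcs of length `ε` centred at its neighbours' spins, which has Haar measure at least
`1 - 4ε`; these events concern distinct even sites, hence are independent, and there are
`L² / 2` even sites. Integrating over the odd spins (Fubini) gives the bound. -/

open Metric
open scoped ENNReal

theorem MeasureTheory.Measure.pow_card_le_pi_of_forall_box {ι : Type*} [Fintype ι]
    {α : ι → Type*} [∀ i, MeasurableSpace (α i)] (μ : ∀ i, Measure (α i))
    [∀ i, IsProbabilityMeasure (μ i)] (p : ι → Prop) [DecidablePred p]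
    {S : Set (∀ i, α i)} (hS : MeasurableSet S) {c : ℝ≥0∞}
    (A : (∀ i : Subtype p, α i) → ∀ j : {i // ¬ p i}, Set (α j))
    (hA : ∀ ψ (j : {i // ¬ p i}), c ≤ μ j (A ψ j))
    (hAS : ∀ ψ θ, (∀ j, θ j ∈ A ψ j) →
      (Equiv.piEquivPiSubtypeProd p α).symm (ψ, θ) ∈ S) :
    c ^ Fintype.card {i // ¬ p i} ≤ Measure.pi μ S := by
  set e := MeasurableEquiv.piEquivPiSubtypeProd α p
  have hslice : ∀ ψ, c ^ Fintype.card {i // ¬ p i} ≤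
      Measure.pi (fun j : {i // ¬ p i} => μ j) (Prod.mk ψ ⁻¹' (e.symm ⁻¹' S)) := fun ψ =>
    calc c ^ Fintype.card {i // ¬ p i} = ∏ _j : {i // ¬ p i}, c := by simp
      _ ≤ ∏ j : {i // ¬ p i}, μ j (A ψ j) := Finset.prod_le_prod' fun j _ => hA ψ j
      _ = Measure.pi (fun j : {i // ¬ p i} => μ j) (Set.univ.pi (A ψ)) :=
          (Measure.pi_pi _ _).symm
      _ ≤ _ := measure_mono fun θ hθ => hAS ψ θ fun j => hθ j (Set.mem_univ j)
  have hpres :=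
    (measurePreserving_piEquivPiSubtypeProd μ p).measure_preimage_equiv (e.symm ⁻¹' S)
  rw [← Set.preimage_comp, e.symm_comp_self, Set.preimage_id,
    Measure.prod_apply (e.symm.measurable hS)] at hpres
  rw [hpres]
  calc c ^ Fintype.card {i // ¬ p i}
      = ∫⁻ _, c ^ Fintype.card {i // ¬ p i} ∂Measure.pi fun i : Subtype p => μ i := by simp
    _ ≤ _ := lintegral_mono hslice

theorem AddCircle.ofReal_le_haarAddCircle_compl_iUnion_closedBall {κ : Type*} [Fintype κ]
    (v : κ → AddCircle (1 : ℝ)) {r : ℝ} (hr : 0 ≤ r) :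
    ENNReal.ofReal (1 - 2 * r * Fintype.card κ) ≤
      haarAddCircle (⋃ k, closedBall (v k) r)ᶜ := by
  have hball : ∀ k, haarAddCircle (closedBall (v k) r) ≤ ENNReal.ofReal (2 * r) := by
    intro k
    have h := volume_closedBall (T := 1) (x := v k) r
    rw [volume_eq_smul_haarAddCircle] at h
    simp only [ENNReal.ofReal_one, one_smul] at h
    rw [h]
    exact ENNReal.ofReal_le_ofReal (min_le_right _ _)
  rw [prob_compl_eq_one_sub (MeasurableSet.iUnion fun k => isClosed_closedBall.measurableSet),
    mul_comm, ENNReal.ofReal_sub _ (by positivity), ENNReal.ofReal_one]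
  gcongr
  calc _ ≤ ∑ k, haarAddCircle (closedBall (v k) r) := measure_iUnion_fintype_le _ _
    _ ≤ ∑ _k : κ, ENNReal.ofReal (2 * r) := Finset.sum_le_sum fun k _ => hball k
    _ = _ := by simp [ENNReal.ofReal_mul]

namespace Torus

variable {L : ℕ} (hL : 2 ∣ L)

def parity (x : Torus L) : ZMod 2 :=
  ZMod.castHom hL (ZMod 2) x.1 + ZMod.castHom hL (ZMod 2) x.2

def IsOdd (x : Torus L) : Prop :=
  parity hL x = 1

instance : DecidablePred (IsOdd hL) :=
  fun x => inferInstanceAs (Decidable (parity hL x = 1))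

def neighbor (x : Torus L) : Fin 2 × Bool → Torus L
  | (i, true) => x + coordVec L i
  | (i, false) => x - coordVec L i

variable {hL}

theorem parity_add_coordVec (x : Torus L) (i : Fin 2) :
    parity hL (x + coordVec L i) = parity hL x + 1 := by
  fin_cases i <;>
    simp only [parity, coordVec, Prod.fst_add, Prod.snd_add, map_add, map_one, map_zero] <;> ring

theorem isOdd_add_coordVec_iff {x : Torus L} {i : Fin 2} :
    IsOdd hL (x + coordVec L i) ↔ ¬ IsOdd hL x := by
  rw [IsOdd, IsOdd, parity_add_coordVec]
  generalize parity hL x = a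
  revert a
  decide

theorem isOdd_sub_coordVec_iff {x : Torus L} {i : Fin 2} :
    IsOdd hL (x - coordVec L i) ↔ ¬ IsOdd hL x := by
  rw [iff_not_comm, ← isOdd_add_coordVec_iff (i := i), sub_add_cancel]

theorem isOdd_neighbor {x : Torus L} (hx : ¬ IsOdd hL x) : ∀ k, IsOdd hL (neighbor x k)
  | (_, true) => isOdd_add_coordVec_iff.2 hx
  | (_, false) => isOdd_sub_coordVec_iff.2 hx

theorem card_not_isOdd [NeZero L] : Fintype.card {x : Torus L // ¬ IsOdd hL x} = L ^ 2 / 2 := by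
  have hshift : {x : Torus L // ¬ IsOdd hL x} ≃ {x : Torus L // IsOdd hL x} :=
    { toFun := fun x => ⟨x + coordVec L 0, isOdd_add_coordVec_iff.2 x.2⟩
      invFun := fun x => ⟨x - coordVec L 0, fun h => isOdd_sub_coordVec_iff.1 h x.2⟩
      left_inv := fun x => by simp
      right_inv := fun x => by simp }
  have hsplit := Fintype.card_subtype_compl (IsOdd hL)
  have hcard : Fintype.card (Torus L) = L ^ 2 := by simp [ZMod.card, sq]
  rw [Fintype.card_congr hshift] at hsplit ⊢
  omega

end Torus

theorem measurableSet_forall_not_isOrderedBond (L : ℕ) [NeZero L] (ε : ℝ) :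
    MeasurableSet {φ : Config L | ∀ x i, ¬ IsOrderedBond L ε φ x i} := by
  simp only [IsOrderedBond, not_le, Set.ofPred_forall]
  exact .iInter fun x => .iInter fun i => measurableSet_lt measurable_const
    ((measurable_pi_apply x).sub (measurable_pi_apply (x + coordVec L i))).norm

theorem forall_not_isOrderedBond_of_lt_dist_neighbor {L : ℕ} [NeZero L] (hL : 2 ∣ L) {ε : ℝ}
    {φ : Config L}
    (h : ∀ y, ¬ Torus.IsOdd hL y → ∀ k, ε / 2 < dist (φ y) (φ (Torus.neighbor y k))) :
    ∀ x i, ¬ IsOrderedBond L ε φ x i := by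
  intro x i
  rw [IsOrderedBond, not_le, ← dist_eq_norm]
  by_cases hx : Torus.IsOdd hL x
  · have hbond := h (x + coordVec L i) (fun h' => Torus.isOdd_add_coordVec_iff.1 h' hx) (i, false)
    rwa [Torus.neighbor, add_sub_cancel_right, dist_comm] at hbond
  · exact h x hx (i, true)

/-- the set of fully `ε`-disordered configurations has measure
at least `(1 - 4ε)^{L²/2}` when `L` is even. -/
theorem toy_disordered_measure_lower_bound (L : ℕ) (hL : 2 ≤ L) (hLeven : Even L)
    (ε : ℝ) (hε : 0 < ε) (hε' : ε < 1 / 4) :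
    haveI : NeZero L := ⟨by omega⟩
    ENNReal.ofReal ((1 - 4 * ε) ^ (L ^ 2 / 2)) ≤
      toyMeasure L {φ : Config L | ∀ x : Torus L, ∀ i : Fin 2, ¬ IsOrderedBond L ε φ x i} := by
  have : NeZero L := ⟨by omega⟩
  have hd : 2 ∣ L := hLeven.two_dvd
  let fill (ψ : {x // Torus.IsOdd hd x} → AddCircle (1 : ℝ)) : Config L :=
    (Equiv.piEquivPiSubtypeProd (Torus.IsOdd hd) _).symm (ψ, 0)
  rw [← Torus.card_not_isOdd (hL := hd), ENNReal.ofReal_pow (by linarith)]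
  refine Measure.pow_card_le_pi_of_forall_box _ (Torus.IsOdd hd)
    (measurableSet_forall_not_isOrderedBond L ε)
    (fun ψ y => (⋃ k, closedBall (fill ψ (Torus.neighbor y k)) (ε / 2))ᶜ)
    (fun ψ y => ?_) (fun ψ θ hθ => ?_)
  · convert AddCircle.ofReal_le_haarAddCircle_compl_iUnion_closedBall
      (fun k => fill ψ (Torus.neighbor y k)) (by linarith : 0 ≤ ε / 2) using 2
    rw [Fintype.card_prod, Fintype.card_fin, Fintype.card_bool]
    ring
  · refine forall_not_isOrderedBond_of_lt_dist_neighbor hd fun y hy k => ?_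
    have hθy := hθ ⟨y, hy⟩
    simp only [Set.mem_compl_iff, Set.mem_iUnion, mem_closedBall, not_exists, not_le] at hθy
    simpa [fill, dif_pos (Torus.isOdd_neighbor hy k), dif_neg hy] using hθy k
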